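/- arXiv:1903.05906 — 15 statements merged into one kernel-verified Lean document; each statement's English description precedes it below -/
import Mathlib

section
/- Every simple max-projective right R-module is projective. -/
/-!
A simple module `M` is isomorphic to `R ⧸ I` for a maximal ideal `I`. Max-projectivity lifts the
isomorphism `M ≃ R ⧸ I` through `R → R ⧸ I`, which exhibits `M` as a direct summand of `R`.
-/

universe u v

/-- A module `M` is *max-projective* if every homomorphism `M → R/I`, for `I` a
maximal right ideal of `R`, factors through the canonical projection `R → R/I`. -/
def MaxProjective (R : Type u) [Ring R] (M : Type v) [AddCommGroup M] [Module R M] : Prop :=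
  ∀ I : Submodule R R, IsCoatom I → ∀ g : M →ₗ[R] R ⧸ I,
    ∃ h : M →ₗ[R] R, I.mkQ.comp h = g

theorem MaxProjective.projective_of_linearEquiv_quotient {R : Type u} [Ring R]
    {M : Type v} [AddCommGroup M] [Module R M] (hmp : MaxProjective R M)
    {I : Submodule R R} (hI : IsCoatom I) (e : M ≃ₗ[R] R ⧸ I) : Module.Projective R M := by
  obtain ⟨h, hh⟩ := hmp I hI e
  refine Module.Projective.of_split h (e.symm.toLinearMap ∘ₗ I.mkQ) ?_
  rw [LinearMap.comp_assoc, hh]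
  exact e.symm_comp

/-- Every simple max-projective module is projective. -/
theorem simple_maxProjective_is_projective (R : Type u) [Ring R]
    (M : Type v) [AddCommGroup M] [Module R M]
    (hs : IsSimpleModule R M) (hmp : MaxProjective R M) :
    Module.Projective R M := by
  obtain ⟨I, hI, ⟨e⟩⟩ := isSimpleModule_iff_quot_maximal.mp hs
  exact hmp.projective_of_linearEquiv_quotient hI.out e
end

section
/- A right R-module M is max-projective if and only if for every epimorphism f : N → S with S a simple right R-module and every homomorphism g : M → S, there exists a homomorphism h : M → N with fh = g. -/
/-!
A simple module `S` is isomorphic to `R ⧸ I` for a maximal ideal `I`, so max-projectivity makes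
every `g : M → S` factor through a surjection `R → S`. Since `R` is free, that surjection in turn
lifts along any epimorphism `N → S`, which gives the lift of `g`. Conversely, `R → R ⧸ I` is
such an epimorphism.
-/

universe u v

theorem LinearMap.exists_comp_eq_of_factors_through_projective {R M N S P : Type*} [Semiring R]
    [AddCommMonoid M] [Module R M] [AddCommMonoid N] [Module R N] [AddCommMonoid S] [Module R S]
    [AddCommMonoid P] [Module R P] [Module.Projective R P]
    {f : N →ₗ[R] S} (hf : Function.Surjective f) {g : M →ₗ[R] S} (p : P →ₗ[R] S)
    (hg : ∃ h : M →ₗ[R] P, p.comp h = g) : ∃ h : M →ₗ[R] N, f.comp h = g := by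
  obtain ⟨h, rfl⟩ := hg
  obtain ⟨q, rfl⟩ := Module.projective_lifting_property f p hf
  exact ⟨q.comp h, rfl⟩

theorem MaxProjective.exists_factorization_of_isSimpleModule {R M S : Type*} [Ring R]
    [AddCommGroup M] [Module R M] [AddCommGroup S] [Module R S] (hM : MaxProjective R M)
    (hS : IsSimpleModule R S) (g : M →ₗ[R] S) :
    ∃ (p : R →ₗ[R] S) (h : M →ₗ[R] R), p.comp h = g := by
  obtain ⟨I, hI, ⟨e⟩⟩ := isSimpleModule_iff_quot_maximal.mp hS
  obtain ⟨h, hh⟩ := hM I (Ideal.isMaximal_def.mp hI) (e.toLinearMap.comp g)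
  refine ⟨e.symm.toLinearMap.comp I.mkQ, h, ?_⟩
  rw [LinearMap.comp_assoc, hh, ← LinearMap.comp_assoc, e.symm_comp, LinearMap.id_comp]

/-- `M` is max-projective iff every homomorphism from `M` to a simple module `S`
lifts along every epimorphism onto `S`. -/
theorem maxProjective_iff_lifts_to_simple (R : Type u) [Ring R]
    (M : Type u) [AddCommGroup M] [Module R M] :
    MaxProjective R M ↔
      ∀ (N S : Type u) [AddCommGroup N] [Module R N] [AddCommGroup S] [Module R S],
        IsSimpleModule R S → ∀ f : N →ₗ[R] S, Function.Surjective f →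
          ∀ g : M →ₗ[R] S, ∃ h : M →ₗ[R] N, f.comp h = g := by
  constructor
  · intro hM N S _ _ _ _ hS f hf g
    obtain ⟨p, hp⟩ := hM.exists_factorization_of_isSimpleModule hS g
    exact LinearMap.exists_comp_eq_of_factors_through_projective hf p hp
  · intro hlift I hI g
    exact hlift R (R ⧸ I) (isSimpleModule_iff_isCoatom.mpr hI) I.mkQ I.mkQ_surjective g
end

section
/- A ring R is semisimple if and only if every simple right R-module is max-projective. -/
universe u v

/-- `R` is semisimple iff every simple right `R`-module is max-projective. -/
theorem isSemisimpleRing_iff_simples_maxProjective (R : Type u) [Ring R] :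
    IsSemisimpleRing R ↔
      ∀ (M : Type u) [AddCommGroup M] [Module R M],
        IsSimpleModule R M → MaxProjective R M := by
  constructor
  · intro hR M _ _ _ I hI g
    obtain ⟨J, hJ⟩ := exists_isCompl I
    refine ⟨J.subtype.comp ((Submodule.quotientEquivOfIsCompl I J hJ).toLinearMap.comp g), ?_⟩
    ext x
    simp only [LinearMap.comp_apply, Submodule.mkQ_apply, LinearEquiv.coe_coe,
      Submodule.coe_subtype]
    exact Submodule.mk_quotientEquivOfIsCompl_apply hJ (g x)
  · intro h
    refine IsSemisimpleModule.of_sSup_simples_eq_top ?_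
    by_contra hne
    obtain ⟨I, hI, hSI⟩ :=
      (eq_top_or_exists_le_coatom (sSup {m : Submodule R R | IsSimpleModule R m})).resolve_left hne
    have hsimple : IsSimpleModule R (R ⧸ I) := isSimpleModule_iff_isCoatom.mpr hI
    obtain ⟨f, hf⟩ := h (R ⧸ I) hsimple I hI LinearMap.id
    have hfx : ∀ x : R ⧸ I, I.mkQ (f x) = x := fun x => congrArg (· x) hf
    have hinj : Function.Injective f := fun a b hab => by
      rw [← hfx a, ← hfx b, hab]
    have hrange : IsSimpleModule R (LinearMap.range f) :=
      IsSimpleModule.congr (LinearEquiv.ofInjective f hinj).symm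
    have hle : LinearMap.range f ≤ I := le_trans (le_sSup hrange) hSI
    have : ∀ x : R ⧸ I, x = 0 := fun x => by
      rw [← hfx x, Submodule.mkQ_apply, Submodule.Quotient.mk_eq_zero]
      exact hle ⟨x, rfl⟩
    have := hsimple.nontrivial
    obtain ⟨a, b, hab⟩ := this
    exact hab ((‹∀ x : R ⧸ I, x = 0› a).trans (‹∀ x : R ⧸ I, x = 0› b).symm)
end

section
/- If R is a right self-injective ring and M is a max-projective right R-module, then Ext^1_R(M, I) = 0 for every maximal right ideal I of R. -/
universe u v

open CategoryTheory

set_option maxHeartbeats 1000000 in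
/-- Over a right self-injective ring, `Ext¹(M, I)` vanishes for every maximal right
ideal `I` whenever `M` is max-projective. -/
theorem ext_vanishing_of_maxProjective (R : Type u) [Ring R]
    [Module.Injective R R]
    (M : Type u) [AddCommGroup M] [Module R M] (hmp : MaxProjective R M) :
    ∀ I : Submodule R R, IsCoatom I →
      Subsingleton (((Ext ℤ (ModuleCat R) 1).obj
        (Opposite.op (ModuleCat.of R M))).obj (ModuleCat.of R I)) := by
  intro I hI
  set Mc := ModuleCat.of R M with hMc
  let P : ProjectiveResolution Mc := ProjectiveResolution.of Mc
  have hz : Limits.IsZero (((Ext ℤ (ModuleCat R) 1).obj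
      (Opposite.op Mc)).obj (ModuleCat.of R I)) := by
    refine Limits.IsZero.of_iso ?_ (P.isoExt 1 (ModuleCat.of R I))
    rw [← HomologicalComplex.exactAt_iff_isZero_homology,
      HomologicalComplex.exactAt_iff' _ 0 1 2 (by simp) (by simp)]
    rw [ShortComplex.moduleCat_exact_iff]
    intro f hf
    -- unpack data
    set d2 : P.complex.X 2 ⟶ P.complex.X 1 := P.complex.d 2 1 with hd2
    set d1 : P.complex.X 1 ⟶ P.complex.X 0 := P.complex.d 1 0 with hd1
    -- f : P.complex.X 1 ⟶ ModuleCat.of R ↥I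
    let fhom : P.complex.X 1 ⟶ ModuleCat.of R I := f
    have hf' : d2 ≫ fhom = 0 := by
      simp [ChainComplex.linearYonedaObj] at hf
      exact hf
    -- exactness at 1 : ker d1 ≤ range d2
    have hex1 : LinearMap.ker d1.hom ≤ LinearMap.range d2.hom := by
      have := (P.exact_succ 0)
      rw [ShortComplex.moduleCat_exact_iff_ker_sub_range] at this
      exact this
    -- the augmentation
    let e : (((ChainComplex.single₀ (ModuleCat R)).obj Mc).X 0) ≅ Mc :=
      HomologicalComplex.singleObjXSelf (ComplexShape.down ℕ) 0 Mc
    let p : P.complex.X 0 ⟶ Mc := P.π.f 0 ≫ e.hom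
    have hS0 : (ShortComplex.mk d1 (P.π.f 0) P.complex_d_comp_π_f_zero).Exact ∧
        Epi (P.π.f 0) := by
      rw [ShortComplex.exact_and_epi_g_iff_g_is_cokernel]
      exact ⟨P.isColimitCokernelCofork⟩
    have hp : Function.Surjective p := by
      have h1 : Function.Surjective (P.π.f 0) :=
        (ModuleCat.epi_iff_surjective _).mp hS0.2
      have h2 : Function.Surjective e.hom :=
        (ModuleCat.epi_iff_surjective _).mp inferInstance
      exact h2.comp h1
    have hkerp : LinearMap.ker p.hom = LinearMap.range d1.hom := by
      have hinj : Function.Injective e.hom :=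
        (ModuleCat.mono_iff_injective _).mp inferInstance
      have h1 : LinearMap.range d1.hom = LinearMap.ker (P.π.f 0).hom :=
        (ShortComplex.moduleCat_exact_iff_range_eq_ker _).mp hS0.1
      ext x
      constructor
      · intro hx
        have : e.hom (P.π.f 0 x) = e.hom 0 := by
          exact (LinearMap.mem_ker.mp hx).trans (map_zero _).symm
        have := hinj this
        rw [h1]
        exact this
      · intro hx
        rw [h1] at hx
        have hx0 : P.π.f 0 x = 0 := hx
        show e.hom (P.π.f 0 x) = 0
        rw [hx0, map_zero]
    -- the lift of f to R on range d1
    let fR : P.complex.X 1 →ₗ[R] R := I.subtype.comp fhom.hom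
    have h1 : LinearMap.ker d1.hom ≤ LinearMap.ker fR := by
      intro b hb
      obtain ⟨c, hc⟩ := hex1 hb
      have : fhom (d2 c) = 0 := by
        have := congrArg (fun (g : P.complex.X 2 ⟶ ModuleCat.of R I) => g c) hf'
        simpa using this
      rw [LinearMap.mem_ker, ← hc]
      show I.subtype (fhom (d2 c)) = 0
      rw [this, map_zero]
    let φ : LinearMap.range d1.hom →ₗ[R] R :=
      ((LinearMap.ker d1.hom).liftQ fR h1).comp
        (d1.hom.quotKerEquivRange.symm :
          LinearMap.range d1.hom →ₗ[R] _)
    have hφ : ∀ b : P.complex.X 1, φ ⟨d1 b, ⟨b, rfl⟩⟩ = fR b := by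
      intro b
      have := d1.hom.quotKerEquivRange_symm_apply_image b
        ⟨b, rfl⟩
      simp [φ, this]
    -- extend by injectivity of R
    obtain ⟨g', hg'⟩ := Module.Injective.out (LinearMap.range d1.hom).subtype
      (Submodule.injective_subtype _) φ
    have hg'd1 : ∀ b, g' (d1 b) = fR b := fun b => by
      have := hg' ⟨d1 b, ⟨b, rfl⟩⟩
      simpa [hφ b] using this
    -- descend mkQ ∘ g' to M
    let q : P.complex.X 0 →ₗ[R] R ⧸ I := I.mkQ.comp g'
    have hq : LinearMap.ker p.hom ≤ LinearMap.ker q := by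
      intro a ha
      rw [hkerp] at ha
      obtain ⟨b, hb⟩ := ha
      have : q a = I.mkQ (fR b) := by simp [q, ← hb, hg'd1]
      rw [LinearMap.mem_ker, this]
      simp [fR, Submodule.Quotient.mk_eq_zero]
    let eq : (P.complex.X 0 ⧸ LinearMap.ker p.hom) ≃ₗ[R] M :=
      p.hom.quotKerEquivOfSurjective hp
    let gbar : M →ₗ[R] R ⧸ I :=
      ((LinearMap.ker p.hom).liftQ q hq).comp eq.symm.toLinearMap
    have hgbar : ∀ a, gbar (p a) = q a := by
      intro a
      have h2 : eq (Submodule.Quotient.mk a) = p a := rfl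
      have h3 : eq.symm (p a) = Submodule.Quotient.mk a := by
        rw [← h2]; exact eq.symm_apply_apply _
      simp [gbar, h3]
    obtain ⟨h, hh⟩ := hmp I hI gbar
    -- the corrected map
    let g'' : P.complex.X 0 →ₗ[R] R := g' - h.comp p.hom
    have hmem : ∀ a, g'' a ∈ I := by
      intro a
      rw [← Submodule.Quotient.mk_eq_zero I]
      have hcong : I.mkQ (h (p a)) = gbar (p a) :=
        congrArg (fun (t : M →ₗ[R] R ⧸ I) => t (p a)) hh
      have : I.mkQ (g'' a) = q a - gbar (p a) := by
        simp only [g'', q, LinearMap.coe_comp, Function.comp_apply, LinearMap.sub_apply,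
          map_sub]
        congr 1
      rw [show Submodule.Quotient.mk (g'' a) = I.mkQ (g'' a) from rfl, this, hgbar, sub_self]
    let g : P.complex.X 0 ⟶ ModuleCat.of R I := ModuleCat.ofHom (LinearMap.codRestrict I g'' hmem)
    refine ⟨g, ?_⟩
    show (HomologicalComplex.sc' (P.complex.linearYonedaObj ℤ (ModuleCat.of R I)) 0 1 2).f g = f
    have : (d1 ≫ g : P.complex.X 1 ⟶ ModuleCat.of R I) = fhom := by
      apply ModuleCat.hom_ext
      apply LinearMap.ext
      intro b
      apply Subtype.ext
      show g'' (d1 b) = fR b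
      have hpd1 : p (d1 b) = 0 := by
        have : d1 b ∈ LinearMap.ker p.hom := by rw [hkerp]; exact ⟨b, rfl⟩
        exact this
      show g' (d1 b) - h (p (d1 b)) = fR b
      rw [hpd1, map_zero, sub_zero, hg'd1]
    exact this
  set X := ((Ext ℤ (ModuleCat R) 1).obj (Opposite.op Mc)).obj (ModuleCat.of R I) with hX
  have h0 : 𝟙 X = 0 := hz.eq_of_src _ _
  refine ⟨fun a b => ?_⟩
  have ha : (𝟙 X : X ⟶ X) a = (0 : X ⟶ X) a := by rw [h0]
  have hb : (𝟙 X : X ⟶ X) b = (0 : X ⟶ X) b := by rw [h0]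
  calc a = (𝟙 X : X ⟶ X) a := rfl
    _ = (0 : X ⟶ X) a := ha
    _ = (0 : X ⟶ X) b := rfl
    _ = (𝟙 X : X ⟶ X) b := hb.symm
    _ = b := rfl
end

section
/- Let 0 → A → B → C → 0 be a short exact sequence of right R-modules. If a right R-module M is A-subprojective and C-subprojective, then M is B-subprojective. -/
universe u v

/-- `M` is *`N`-subprojective* if every homomorphism `M → N` lifts along every
epimorphism onto `N`. -/
def Subprojective (R : Type u) [Ring R] (M : Type u) [AddCommGroup M] [Module R M]
    (N : Type u) [AddCommGroup N] [Module R N] : Prop :=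
  ∀ f : M →ₗ[R] N, ∀ (B : Type u) [AddCommGroup B] [Module R B] (g : B →ₗ[R] N),
    Function.Surjective g → ∃ h : M →ₗ[R] B, g.comp h = f

/-- Given a short exact sequence `0 → A → B → C → 0`, if `M` is `A`-subprojective
and `C`-subprojective, then `M` is `B`-subprojective. -/
theorem subprojective_of_ses (R : Type u) [Ring R]
    (M A B C : Type u) [AddCommGroup M] [Module R M] [AddCommGroup A] [Module R A]
    [AddCommGroup B] [Module R B] [AddCommGroup C] [Module R C]
    (i : A →ₗ[R] B) (p : B →ₗ[R] C)
    (hi : Function.Injective i) (hp : Function.Surjective p)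
    (hex : LinearMap.range i = LinearMap.ker p)
    (hA : Subprojective R M A) (hC : Subprojective R M C) :
    Subprojective R M B := by
  intro f D _ _ g hg
  -- Step 1: lift p ∘ f along p ∘ g using C-subprojectivity
  obtain ⟨h₁, hh₁⟩ := hC (p.comp f) D (p.comp g) (hp.comp hg)
  -- f - g ∘ h₁ lands in range i
  set f₂ : M →ₗ[R] B := f - g.comp h₁ with hf₂
  have hmem : ∀ m : M, f₂ m ∈ LinearMap.range i := by
    intro m
    rw [hex, LinearMap.mem_ker]
    have := congrArg (fun φ : M →ₗ[R] C => φ m) hh₁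
    simp only [LinearMap.comp_apply] at this
    simp [hf₂, map_sub, this]
  let eI : A ≃ₗ[R] LinearMap.range i := LinearEquiv.ofInjective i hi
  let f₂' : M →ₗ[R] LinearMap.range i := f₂.codRestrict _ hmem
  let f' : M →ₗ[R] A := eI.symm.toLinearMap.comp f₂'
  -- Step 2: restrict g to the preimage of range i
  let D' : Submodule R D := Submodule.comap g (LinearMap.range i)
  have hmem' : ∀ d : D', g d ∈ LinearMap.range i := fun d => d.2
  let gr : D' →ₗ[R] LinearMap.range i := (g.comp D'.subtype).codRestrict _ hmem'
  let g' : D' →ₗ[R] A := eI.symm.toLinearMap.comp gr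
  have hg' : Function.Surjective g' := by
    intro a
    obtain ⟨d, hd⟩ := hg (i a)
    have hdm : d ∈ D' := by
      simp [D', Submodule.mem_comap, hd]
    refine ⟨⟨d, hdm⟩, ?_⟩
    apply eI.injective
    simp only [g', LinearMap.comp_apply]
    simp only [LinearEquiv.coe_coe, LinearEquiv.apply_symm_apply]
    ext
    simp [gr, eI, hd, LinearEquiv.ofInjective_apply]
    exact hd
  obtain ⟨h₂, hh₂⟩ := hA f' D' g' hg'
  refine ⟨h₁ + D'.subtype.comp h₂, ?_⟩
  ext m
  have key : g' (h₂ m) = f' m := congrArg (fun φ : M →ₗ[R] A => φ m) hh₂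
  have key2 : gr (h₂ m) = f₂' m := by
    have := congrArg eI key
    simpa only [g', f', LinearMap.comp_apply, LinearEquiv.apply_symm_apply,
      LinearEquiv.coe_coe] using this
  have key3 : g ((h₂ m : D)) = f₂ m := congrArg Subtype.val key2
  simp only [LinearMap.comp_apply, LinearMap.add_apply, map_add, Submodule.coe_subtype]
  rw [key3]
  simp [hf₂]
end

section
/- A right R-module M is max-projective if and only if M is N-subprojective for every right R-module N of finite composition length. -/
universe u v

/-!
The modules `N` for which `M` is `N`-subprojective contain the zero module and are closed
under isomorphisms and extensions. A module of finite length is an iterated extension of simple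
modules, and a simple module is `R ⧸ I` for a maximal `I`; for these, a lift of `M → R ⧸ I` to
`R` (max-projectivity) composed with a lift of `R → R ⧸ I` along the epimorphism (projectivity
of `R`) does the job. Conversely `R ⧸ I` has finite length and `R → R ⧸ I` is an epimorphism.
-/

namespace Subprojective

variable {R : Type u} [Ring R] {M : Type u} [AddCommGroup M] [Module R M]
  {N : Type u} [AddCommGroup N] [Module R N]

theorem of_subsingleton [Subsingleton N] : Subprojective R M N :=
  fun _ _ _ _ _ _ ↦ ⟨0, Subsingleton.elim _ _⟩

theorem of_linearEquiv {N' : Type u} [AddCommGroup N'] [Module R N']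
    (hN : Subprojective R M N) (e : N ≃ₗ[R] N') : Subprojective R M N' := by
  intro f B _ _ g hg
  obtain ⟨h, hh⟩ := hN (e.symm.toLinearMap ∘ₗ f) B (e.symm.toLinearMap ∘ₗ g)
    (e.symm.surjective.comp hg)
  refine ⟨h, ?_⟩
  simpa [← LinearMap.comp_assoc] using congrArg (e.toLinearMap ∘ₗ ·) hh

/-- Lift modulo `S` first; the error of that lift takes values in `S`, and lifting it along
the part of `g` over `S` corrects it. -/
theorem of_submodule_of_quotient (S : Submodule R N) (hS : Subprojective R M S)
    (hQ : Subprojective R M (N ⧸ S)) : Subprojective R M N := by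
  intro f B _ _ g hg
  obtain ⟨h₁, hh₁⟩ := hQ (S.mkQ ∘ₗ f) B (S.mkQ ∘ₗ g) (S.mkQ_surjective.comp hg)
  have herr : ∀ m, f m - g (h₁ m) ∈ S := fun m ↦ by
    rw [← Submodule.Quotient.mk_eq_zero, Submodule.Quotient.mk_sub]
    exact sub_eq_zero.mpr (LinearMap.congr_fun hh₁ m).symm
  let gS : Submodule.comap g S →ₗ[R] S := g.restrict fun _ hx ↦ hx
  have hgS : Function.Surjective gS := fun s ↦ by
    obtain ⟨b, hb⟩ := hg s
    exact ⟨⟨b, by simp [hb]⟩, Subtype.ext hb⟩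
  obtain ⟨h₂, hh₂⟩ := hS ((f - g ∘ₗ h₁).codRestrict S herr) _ gS hgS
  refine ⟨h₁ + (Submodule.comap g S).subtype ∘ₗ h₂, LinearMap.ext fun m ↦ ?_⟩
  have hcorr : g (h₂ m) = f m - g (h₁ m) := congrArg Subtype.val (LinearMap.congr_fun hh₂ m)
  simp [hcorr]

end Subprojective

section

variable {R : Type u} [Ring R] {M : Type u} [AddCommGroup M] [Module R M]

theorem MaxProjective.subprojective_quotient {I : Submodule R R} (hM : MaxProjective R M)
    (hI : IsCoatom I) : Subprojective R M (R ⧸ I) := by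
  intro f B _ _ g hg
  obtain ⟨h, hh⟩ := hM I hI f
  obtain ⟨k, hk⟩ := Module.projective_lifting_property g I.mkQ hg
  exact ⟨k ∘ₗ h, by rw [← LinearMap.comp_assoc, hk, hh]⟩

theorem MaxProjective.subprojective_of_isSimpleModule (hM : MaxProjective R M)
    (T : Type u) [AddCommGroup T] [Module R T] [IsSimpleModule R T] : Subprojective R M T := by
  obtain ⟨I, hI, ⟨e⟩⟩ := isSimpleModule_iff_quot_maximal.mp ‹IsSimpleModule R T›
  exact (hM.subprojective_quotient hI.out).of_linearEquiv e.symm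

theorem MaxProjective.subprojective_of_isFiniteLength (hM : MaxProjective R M)
    {N : Type u} [AddCommGroup N] [Module R N] (hN : IsFiniteLength R N) :
    Subprojective R M N := by
  induction hN with
  | of_subsingleton => exact .of_subsingleton
  | of_simple_quotient _ ih =>
    exact .of_submodule_of_quotient _ ih (hM.subprojective_of_isSimpleModule _)

theorem maxProjective_of_subprojective_quotient
    (h : ∀ I : Submodule R R, IsCoatom I → Subprojective R M (R ⧸ I)) : MaxProjective R M :=
  fun I hI f ↦ h I hI f R I.mkQ I.mkQ_surjective

theorem isFiniteLength_of_isSimpleModule (T : Type v) [AddCommGroup T] [Module R T]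
    [IsSimpleModule R T] : IsFiniteLength R T :=
  isFiniteLength_iff_isNoetherian_isArtinian.mpr ⟨inferInstance, inferInstance⟩

end

/-- `M` is max-projective iff `M` is `N`-subprojective for every module `N`
of finite composition length. -/
theorem maxProjective_iff_subprojective_finiteLength (R : Type u) [Ring R]
    (M : Type u) [AddCommGroup M] [Module R M] :
    MaxProjective R M ↔
      ∀ (N : Type u) [AddCommGroup N] [Module R N],
        IsFiniteLength R N → Subprojective R M N :=
  ⟨fun hM _ _ _ hN ↦ hM.subprojective_of_isFiniteLength hN,
    fun h ↦ maxProjective_of_subprojective_quotient fun I hI ↦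
      have : IsSimpleModule R (R ⧸ I) := isSimpleModule_iff_isCoatom.mpr hI
      h _ (isFiniteLength_of_isSimpleModule (R ⧸ I))⟩
end

section
/- A Z-module (abelian group) M is max-projective if and only if M is Z-projective. -/
universe u v

/-- A module `M` is *`R`-projective* if every homomorphism `M → R/I`, for `I` any
right ideal of `R`, factors through the canonical projection `R → R/I`. -/
def RProjective (R : Type u) [Ring R] (M : Type v) [AddCommGroup M] [Module R M] : Prop :=
  ∀ I : Submodule R R, ∀ g : M →ₗ[R] R ⧸ I,
    ∃ h : M →ₗ[R] R, I.mkQ.comp h = g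

set_option maxHeartbeats 1000000 in
theorem key (M : Type u) [AddCommGroup M] [Module ℤ M] (hmax : MaxProjective ℤ M)
    (n : ℕ) (g : M →ₗ[ℤ] ℤ ⧸ Ideal.span {(n : ℤ)}) :
    ∃ h : M →ₗ[ℤ] ℤ, (Ideal.span {(n : ℤ)}).mkQ.comp h = g := by
  induction n using Nat.strong_induction_on with
  | _ n ih =>
  rcases eq_or_ne n 0 with rfl | hn0
  · have hbot : Ideal.span {((0:ℕ) : ℤ)} = (⊥ : Ideal ℤ) := by simp
    let e := Submodule.quotEquivOfEqBot _ hbot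
    refine ⟨e.toLinearMap.comp g, ?_⟩
    ext x
    obtain ⟨y, hy⟩ := (Ideal.span {((0:ℕ):ℤ)}).mkQ_surjective (g x)
    simp only [LinearMap.comp_apply, LinearEquiv.coe_coe, ← hy, Submodule.mkQ_apply]
    rw [Submodule.quotEquivOfEqBot_apply_mk]
  rcases eq_or_ne n 1 with rfl | hn1
  · have hsub : Subsingleton (ℤ ⧸ Ideal.span {((1:ℕ):ℤ)}) := by
      rw [Submodule.Quotient.subsingleton_iff]
      simp
    exact ⟨0, Subsingleton.elim _ _⟩
  obtain ⟨p, hp, hdvd⟩ := Nat.exists_prime_and_dvd hn1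
  obtain ⟨m, hnm⟩ := hdvd
  have hm0 : m ≠ 0 := by rintro rfl; exact hn0 (by simpa using hnm)
  have hmlt : m < n := by
    rw [hnm]
    calc m = 1 * m := (one_mul m).symm
    _ < p * m := (Nat.mul_lt_mul_right (Nat.pos_of_ne_zero hm0)).mpr hp.one_lt
  have hcast : (n : ℤ) = (p : ℤ) * (m : ℤ) := by exact_mod_cast congrArg Nat.cast hnm
  have hpZ : Prime (p : ℤ) := Int.prime_iff_natAbs_prime.mpr (by simpa using hp)
  have hp0 : (p : ℤ) ≠ 0 := by exact_mod_cast hp.ne_zero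
  have hcoatom : IsCoatom (Ideal.span {(p : ℤ)}) := by
    rw [← Ideal.isMaximal_def]
    exact PrincipalIdealRing.isMaximal_of_irreducible hpZ.irreducible
  have hle : Ideal.span {(n : ℤ)} ≤
      Submodule.comap (LinearMap.id : ℤ →ₗ[ℤ] ℤ) (Ideal.span {(p : ℤ)}) := by
    intro x hx
    rw [Ideal.mem_span_singleton] at hx
    obtain ⟨c, rfl⟩ := hx
    rw [Submodule.mem_comap, LinearMap.id_apply, Ideal.mem_span_singleton, hcast]
    exact ⟨m * c, by ring⟩
  let π : (ℤ ⧸ Ideal.span {(n : ℤ)}) →ₗ[ℤ] ℤ ⧸ Ideal.span {(p : ℤ)} :=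
    Submodule.mapQ _ _ LinearMap.id hle
  obtain ⟨f₁, hf₁⟩ := hmax _ hcoatom (π.comp g)
  set g' : M →ₗ[ℤ] ℤ ⧸ Ideal.span {(n : ℤ)} :=
    g - (Ideal.span {(n : ℤ)}).mkQ.comp f₁ with hg'
  have hleμ : Ideal.span {(m : ℤ)} ≤
      Submodule.comap ((p : ℤ) • (LinearMap.id : ℤ →ₗ[ℤ] ℤ)) (Ideal.span {(n : ℤ)}) := by
    intro x hx
    rw [Ideal.mem_span_singleton] at hx
    obtain ⟨c, rfl⟩ := hx
    simp only [Submodule.mem_comap, LinearMap.smul_apply, LinearMap.id_apply, smul_eq_mul]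
    rw [Ideal.mem_span_singleton, hcast]
    exact ⟨c, by ring⟩
  let μ : (ℤ ⧸ Ideal.span {(m : ℤ)}) →ₗ[ℤ] ℤ ⧸ Ideal.span {(n : ℤ)} :=
    Submodule.mapQ _ _ ((p : ℤ) • (LinearMap.id : ℤ →ₗ[ℤ] ℤ)) hleμ
  have hμinj : Function.Injective μ := by
    rw [← LinearMap.ker_eq_bot, eq_bot_iff]
    intro x hx
    obtain ⟨z, rfl⟩ := (Ideal.span {(m : ℤ)}).mkQ_surjective x
    rw [LinearMap.mem_ker, Submodule.mkQ_apply, Submodule.mapQ_apply] at hx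
    simp only [LinearMap.smul_apply, LinearMap.id_apply, smul_eq_mul] at hx
    rw [Submodule.Quotient.mk_eq_zero, Ideal.mem_span_singleton, hcast] at hx
    obtain ⟨c, hc⟩ := hx
    have hz : z = m * c := mul_left_cancel₀ hp0 (by linarith [hc])
    rw [Submodule.mkQ_apply, Submodule.mem_bot, Submodule.Quotient.mk_eq_zero,
      Ideal.mem_span_singleton]
    exact ⟨c, hz⟩
  have hmapπ : ∀ y : ℤ, π ((Ideal.span {(n : ℤ)}).mkQ y) = (Ideal.span {(p : ℤ)}).mkQ y := by
    intro y
    rw [Submodule.mkQ_apply, Submodule.mapQ_apply]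
    rfl
  have hrange : ∀ x : M, g' x ∈ LinearMap.range μ := by
    intro x
    obtain ⟨y, hy⟩ := (Ideal.span {(n : ℤ)}).mkQ_surjective (g' x)
    have hπ : π (g' x) = 0 := by
      rw [hg']
      simp only [LinearMap.sub_apply, map_sub, LinearMap.comp_apply]
      rw [hmapπ (f₁ x)]
      have := congrArg (fun f => f x) hf₁
      simp only [LinearMap.comp_apply] at this
      rw [this]
      simp
    have hyIp : y ∈ Ideal.span {(p : ℤ)} := by
      have h2 := hmapπ y
      rw [hy, hπ] at h2
      rwa [Submodule.mkQ_apply, eq_comm, Submodule.Quotient.mk_eq_zero] at h2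
    rw [Ideal.mem_span_singleton] at hyIp
    obtain ⟨z, rfl⟩ := hyIp
    refine ⟨(Ideal.span {(m : ℤ)}).mkQ z, ?_⟩
    rw [Submodule.mkQ_apply, Submodule.mapQ_apply]
    simpa using hy
  let e := LinearEquiv.ofInjective μ hμinj
  let g₂ : M →ₗ[ℤ] ℤ ⧸ Ideal.span {(m : ℤ)} :=
    e.symm.toLinearMap.comp (g'.codRestrict (LinearMap.range μ) hrange)
  have hμg₂ : ∀ x, μ (g₂ x) = g' x := by
    intro x
    have h3 : (e (g₂ x) : ℤ ⧸ Ideal.span {(n : ℤ)}) = μ (g₂ x) := rfl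
    rw [← h3]
    show ((e (e.symm _) : _) : ℤ ⧸ Ideal.span {(n : ℤ)}) = g' x
    rw [e.apply_symm_apply]
    rfl
  obtain ⟨f₂, hf₂⟩ := ih m hmlt g₂
  refine ⟨f₁ + (p : ℤ) • f₂, ?_⟩
  ext x
  have hf₂x : (Ideal.span {(m : ℤ)}).mkQ (f₂ x) = g₂ x := congrArg (fun f => f x) hf₂
  have h4 : (Ideal.span {(n : ℤ)}).mkQ ((p : ℤ) * f₂ x) = μ ((Ideal.span {(m : ℤ)}).mkQ (f₂ x)) := by
    rw [Submodule.mkQ_apply, Submodule.mkQ_apply, Submodule.mapQ_apply]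
    rfl
  have h5 : (Ideal.span {(n : ℤ)}).mkQ ((p : ℤ) * f₂ x) = g' x := by
    rw [h4, hf₂x, hμg₂]
  have h6 : g' x = g x - (Ideal.span {(n : ℤ)}).mkQ (f₁ x) := by
    rw [hg']; simp
  simp only [LinearMap.comp_apply, LinearMap.add_apply, LinearMap.smul_apply, map_add,
    smul_eq_mul]
  rw [h5, h6]
  ring

/-- A `ℤ`-module is max-projective iff it is `ℤ`-projective. -/
theorem int_maxProjective_iff_RProjective
    (M : Type u) [AddCommGroup M] [Module ℤ M] :
    MaxProjective ℤ M ↔ RProjective ℤ M := by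
  constructor
  · intro hmax I g
    obtain ⟨a, rfl⟩ := (IsPrincipalIdealRing.principal I).principal
    have hspan : (Submodule.span ℤ {a} : Ideal ℤ) = Ideal.span {(a.natAbs : ℤ)} :=
      Ideal.span_singleton_eq_span_singleton.mpr (Int.associated_natAbs a)
    revert g
    rw [hspan]
    exact key M hmax a.natAbs
  · intro h I _ g
    exact h I g
end

section
/- Let M be a right R-module of finite composition length. If M is max-projective, then M is projective. -/
universe u v

open LinearMap Submodule Function

section Aux

variable {R : Type u} [Ring R] {M : Type u} [AddCommGroup M] [Module R M]

/-- Key lemma: lifting maps whose range lies in a finite length submodule. -/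
lemma MaxProjective.key_lift (hmp : MaxProjective R M) (I : Submodule R R)
    (W : Type u) [AddCommGroup W] [Module R W] (hW : IsFiniteLength R W) :
    ∀ ι : W →ₗ[R] R ⧸ I, Function.Injective ι →
      ∀ g : M →ₗ[R] R ⧸ I, LinearMap.range g ≤ LinearMap.range ι →
      ∃ h : M →ₗ[R] R, I.mkQ.comp h = g := by
  induction hW with
  | of_subsingleton =>
    intro ι hι g hg
    refine ⟨0, ?_⟩
    ext m
    obtain ⟨w, hw⟩ := hg (LinearMap.mem_range_self g m)
    rw [Subsingleton.elim w 0, map_zero] at hw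
    simp [← hw]
  | @of_simple_quotient W _ _ N _ _hN ih =>
    intro ι hι g hg
    set W' : Submodule R (R ⧸ I) := N.map ι with hW'def
    have hι' : Function.Injective (ι.comp N.subtype) := hι.comp N.injective_subtype
    have hrange' : LinearMap.range (ι.comp N.subtype) = W' := by
      rw [LinearMap.range_comp, Submodule.range_subtype]
    -- the key "coatom" claim
    have hco : IsCoatom N := isSimpleModule_iff_isCoatom.mp inferInstance
    have hcl : ∀ v : R ⧸ I, v ∈ LinearMap.range ι → v ∉ W' →
        ∀ u ∈ LinearMap.range ι, ∃ s : R, u - s • v ∈ W' := by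
      rintro v ⟨v₀, rfl⟩ hv u ⟨u₀, rfl⟩
      have hv₀ : v₀ ∉ N := fun hm => hv (Submodule.mem_map_of_mem hm)
      have hlt : N < N ⊔ (R ∙ v₀) := by
        refine lt_of_le_of_ne le_sup_left (fun h => hv₀ ?_)
        rw [h]
        exact Submodule.mem_sup_right (Submodule.mem_span_singleton_self v₀)
      have htop : N ⊔ (R ∙ v₀) = ⊤ := hco.2 _ hlt
      have hu : u₀ ∈ N ⊔ (R ∙ v₀) := htop ▸ Submodule.mem_top
      obtain ⟨n, hn, z, hz, hsum⟩ := Submodule.mem_sup.mp hu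
      obtain ⟨s, rfl⟩ := Submodule.mem_span_singleton.mp hz
      refine ⟨s, ?_⟩
      have : ι u₀ - s • ι v₀ = ι n := by
        rw [← map_smul, ← map_sub, ← hsum]
        congr 1
        abel
      rw [this]
      exact Submodule.mem_map_of_mem hn
    by_cases hsub : LinearMap.range g ≤ W'
    · exact ih (ι.comp N.subtype) hι' g (hrange' ▸ hsub)
    · obtain ⟨xb, hxbg, hxbW'⟩ := SetLike.not_le_iff_exists.mp hsub
      have hxbr : xb ∈ LinearMap.range ι := hg hxbg
      -- choose a representative of xb
      obtain ⟨x, hx⟩ := Submodule.Quotient.mk_surjective I xb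
      set μ : R →ₗ[R] R ⧸ I := LinearMap.toSpanSingleton R (R ⧸ I) xb with hμdef
      set ν : R →ₗ[R] (R ⧸ I) ⧸ W' := W'.mkQ.comp μ with hνdef
      have hmemP : ∀ r : R, r ∈ LinearMap.ker ν ↔ r • xb ∈ W' := by
        intro r
        simp only [LinearMap.mem_ker, hνdef, LinearMap.comp_apply, hμdef,
          LinearMap.toSpanSingleton_apply, Submodule.mkQ_apply, Submodule.Quotient.mk_eq_zero]
      have hP : IsCoatom (LinearMap.ker ν) := by
        constructor
        · intro h
          have : (1 : R) ∈ LinearMap.ker ν := h ▸ Submodule.mem_top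
          rw [hmemP, one_smul] at this
          exact hxbW' this
        · intro Q hQ
          obtain ⟨r, hrQ, hrP⟩ := SetLike.exists_of_lt hQ
          have hrx : r • xb ∉ W' := fun h => hrP ((hmemP r).mpr h)
          have hrxr : r • xb ∈ LinearMap.range ι := Submodule.smul_mem _ r hxbr
          obtain ⟨s, hs⟩ := hcl (r • xb) hrxr hrx xb hxbr
          have h1 : (1 - s * r) ∈ LinearMap.ker ν := by
            rw [hmemP, sub_smul, one_smul, mul_smul]
            exact hs
          have h1Q : (1 : R) ∈ Q := by
            have := Q.add_mem (hQ.le h1) (Q.smul_mem s hrQ)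
            simpa using this
          exact Submodule.eq_top_iff'.mpr fun y => by
            simpa using Q.smul_mem y h1Q
      have hrangeν : ∀ m, W'.mkQ (g m) ∈ LinearMap.range ν := by
        intro m
        obtain ⟨s, hs⟩ := hcl xb hxbr hxbW' (g m) (hg (LinearMap.mem_range_self g m))
        refine ⟨s, ?_⟩
        have : ν s = W'.mkQ (s • xb) := rfl
        rw [this]
        rw [← sub_eq_zero, ← map_sub, Submodule.mkQ_apply, Submodule.Quotient.mk_eq_zero]
        simpa using W'.neg_mem hs
      set e := ν.quotKerEquivRange with hedef
      set g' : M →ₗ[R] R ⧸ LinearMap.ker ν :=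
        e.symm.toLinearMap ∘ₗ LinearMap.codRestrict (LinearMap.range ν) (W'.mkQ ∘ₗ g) hrangeν
        with hg'def
      obtain ⟨h₁, hh₁⟩ := hmp (LinearMap.ker ν) hP g'
      have hkey : ∀ m, ν (h₁ m) = W'.mkQ (g m) := by
        intro m
        have h2 : (LinearMap.ker ν).mkQ (h₁ m) = g' m := LinearMap.congr_fun hh₁ m
        have h3 : (e ((LinearMap.ker ν).mkQ (h₁ m)) : (R ⧸ I) ⧸ W') = ν (h₁ m) :=
          ν.quotKerEquivRange_apply_mk (h₁ m)
        rw [h2, hg'def] at h3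
        simp only [LinearMap.comp_apply, LinearEquiv.coe_coe, LinearEquiv.apply_symm_apply] at h3
        rw [← h3]
        rfl
      set g₂ : M →ₗ[R] R ⧸ I := g - μ.comp h₁ with hg₂def
      have hg₂ : LinearMap.range g₂ ≤ LinearMap.range (ι.comp N.subtype) := by
        rw [hrange']
        rintro _ ⟨m, rfl⟩
        have : W'.mkQ (g₂ m) = 0 := by
          simp only [hg₂def, LinearMap.sub_apply, map_sub, LinearMap.comp_apply]
          rw [← hkey m]
          simp [hνdef]
        rwa [Submodule.mkQ_apply, Submodule.Quotient.mk_eq_zero] at this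
      obtain ⟨h₂, hh₂⟩ := ih (ι.comp N.subtype) hι' g₂ hg₂
      refine ⟨h₂ + (LinearMap.toSpanSingleton R R x).comp h₁, ?_⟩
      ext m
      have hmkq : I.mkQ (h₂ m) = g₂ m := LinearMap.congr_fun hh₂ m
      have hμx : ∀ r : R, I.mkQ (r • x) = μ r := by
        intro r
        rw [hμdef, LinearMap.toSpanSingleton_apply, ← hx, ← Submodule.Quotient.mk_smul]
        rfl
      simp only [LinearMap.comp_apply, LinearMap.add_apply, map_add,
        LinearMap.toSpanSingleton_apply]
      rw [hmkq, hμx (h₁ m), hg₂def]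
      simp

lemma MaxProjective.rProjective (hfl : IsFiniteLength R M) (hmp : MaxProjective R M) :
    RProjective R M := by
  intro I g
  obtain ⟨hNoe, hArt⟩ := isFiniteLength_iff_isNoetherian_isArtinian.mp hfl
  have hfl' : IsFiniteLength R (LinearMap.range g) := by
    refine g.quotKerEquivRange.isFiniteLength ?_
    exact isFiniteLength_iff_isNoetherian_isArtinian.mpr ⟨inferInstance, inferInstance⟩
  exact hmp.key_lift I (LinearMap.range g) hfl' (LinearMap.range g).subtype
    (LinearMap.range g).injective_subtype g (by rw [Submodule.range_subtype])

/-- Relative projectivity via surjections. -/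
def EpiProjFrom (R : Type u) [Ring R] (N : Type u) [AddCommGroup N] [Module R N]
    (M : Type u) [AddCommGroup M] [Module R M] : Prop :=
  ∀ (X : Type u) [AddCommGroup X] [Module R X] (e : N →ₗ[R] X), Function.Surjective e →
    ∀ g : M →ₗ[R] X, ∃ h : M →ₗ[R] N, e.comp h = g

lemma RProjective.epiProjFrom (h : RProjective R M) : EpiProjFrom R R M := by
  intro X _ _ e he g
  have hmem : ∀ m, g m ∈ LinearMap.range e := fun m => he (g m)
  set eq := e.quotKerEquivRange with heq
  obtain ⟨h₁, hh₁⟩ := h (LinearMap.ker e)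
    (eq.symm.toLinearMap ∘ₗ LinearMap.codRestrict (LinearMap.range e) g hmem)
  refine ⟨h₁, ?_⟩
  ext m
  have h2 : (LinearMap.ker e).mkQ (h₁ m) = eq.symm ⟨g m, hmem m⟩ :=
    LinearMap.congr_fun hh₁ m
  have h3 : (eq ((LinearMap.ker e).mkQ (h₁ m)) : X) = e (h₁ m) :=
    e.quotKerEquivRange_apply_mk (h₁ m)
  rw [h2, LinearEquiv.apply_symm_apply] at h3
  simpa using h3.symm

lemma EpiProjFrom.of_equiv {N N' : Type u} [AddCommGroup N] [Module R N]
    [AddCommGroup N'] [Module R N'] (eqv : N ≃ₗ[R] N')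
    (h : EpiProjFrom R N M) : EpiProjFrom R N' M := by
  intro X _ _ e he g
  obtain ⟨h₁, hh₁⟩ := h X (e ∘ₗ eqv.toLinearMap) (he.comp eqv.surjective) g
  refine ⟨eqv.toLinearMap ∘ₗ h₁, ?_⟩
  ext m
  exact LinearMap.congr_fun hh₁ m

lemma EpiProjFrom.prod {A B : Type u} [AddCommGroup A] [Module R A]
    [AddCommGroup B] [Module R B]
    (hA : EpiProjFrom R A M) (hB : EpiProjFrom R B M) : EpiProjFrom R (A × B) M := by
  intro X _ _ e he g
  set eB : B →ₗ[R] X := e ∘ₗ LinearMap.inr R A B with heB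
  set Y : Submodule R X := LinearMap.range eB with hY
  set e₁ : A →ₗ[R] X ⧸ Y := Y.mkQ ∘ₗ e ∘ₗ LinearMap.inl R A B with he₁
  have he₁surj : Function.Surjective e₁ := by
    intro z
    obtain ⟨x, rfl⟩ := Y.mkQ_surjective z
    obtain ⟨⟨a, b⟩, rfl⟩ := he x
    refine ⟨a, ?_⟩
    have hab : (a, b) = (a, 0) + (0, b) := by simp
    rw [hab, map_add, map_add]
    have : Y.mkQ (e (0, b)) = 0 := by
      rw [Submodule.mkQ_apply, Submodule.Quotient.mk_eq_zero]
      exact ⟨b, rfl⟩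
    simp only [he₁, LinearMap.comp_apply, LinearMap.inl_apply]
    rw [this, add_zero]
  obtain ⟨h₁, hh₁⟩ := hA (X ⧸ Y) e₁ he₁surj (Y.mkQ ∘ₗ g)
  set g₂ : M →ₗ[R] X := g - e ∘ₗ LinearMap.inl R A B ∘ₗ h₁ with hg₂
  have hg₂mem : ∀ m, g₂ m ∈ Y := by
    intro m
    have h0 : Y.mkQ (g₂ m) = 0 := by
      have := LinearMap.congr_fun hh₁ m
      simp only [hg₂, LinearMap.sub_apply, map_sub, LinearMap.comp_apply] at this ⊢
      rw [← this, sub_eq_zero]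
      rfl
    rwa [Submodule.mkQ_apply, Submodule.Quotient.mk_eq_zero] at h0
  obtain ⟨h₂, hh₂⟩ := hB Y eB.rangeRestrict eB.surjective_rangeRestrict
    (LinearMap.codRestrict Y g₂ hg₂mem)
  refine ⟨LinearMap.prod h₁ h₂, ?_⟩
  ext m
  have h4 : eB (h₂ m) = g₂ m := by
    have := LinearMap.congr_fun hh₂ m
    have := congrArg (Subtype.val) this
    simpa using this
  have h5 : (h₁ m, h₂ m) = ((h₁ m, 0) : A × B) + (0, h₂ m) := by simp
  simp only [LinearMap.comp_apply, LinearMap.prod_apply, Function.prod]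
  rw [h5, map_add]
  have h6 : e (0, h₂ m) = g₂ m := h4
  rw [h6, hg₂]
  simp

/-- The linear equivalence `R × (Fin n → R) ≃ (Fin (n+1) → R)`. -/
def prodPiFinSucc (R : Type u) [Ring R] (n : ℕ) :
    (R × (Fin n → R)) ≃ₗ[R] (Fin (n + 1) → R) where
  toFun p := Fin.cons p.1 p.2
  invFun f := (f 0, fun i => f i.succ)
  map_add' p q := by
    funext i
    refine Fin.cases ?_ (fun j => ?_) i <;> simp
  map_smul' r p := by
    funext i
    refine Fin.cases ?_ (fun j => ?_) i <;> simp
  left_inv p := by simp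
  right_inv f := by
    funext i
    refine Fin.cases ?_ (fun j => ?_) i <;> simp

lemma EpiProjFrom.pi (h : EpiProjFrom R R M) : ∀ n, EpiProjFrom R (Fin n → R) M := by
  intro n
  induction n with
  | zero =>
    intro X _ _ e he g
    have : Subsingleton X := he.subsingleton
    exact ⟨0, by ext m; exact Subsingleton.elim _ _⟩
  | succ n ih =>
    exact EpiProjFrom.of_equiv (prodPiFinSucc R n) (EpiProjFrom.prod h ih)

end Aux

/-- A max-projective module of finite length is projective. -/
theorem maxProjective_finiteLength_projective (R : Type u) [Ring R]
    (M : Type u) [AddCommGroup M] [Module R M]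
    (hfl : IsFiniteLength R M) (hmp : MaxProjective R M) :
    Module.Projective R M := by
  have hr : RProjective R M := hmp.rProjective hfl
  obtain ⟨hNoe, hArt⟩ := isFiniteLength_iff_isNoetherian_isArtinian.mp hfl
  obtain ⟨n, e, he⟩ := Module.Finite.exists_fin' R M
  obtain ⟨h, hh⟩ := hr.epiProjFrom.pi n M e he LinearMap.id
  exact Module.Projective.of_split h e hh
end

section
/- If R is a right GV-ring (every singular simple right R-module is injective), then every submodule of a max-projective right R-module is max-projective. -/
universe u v

def IsEssential {R : Type u} [Ring R] {M : Type v} [AddCommGroup M] [Module R M]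
    (N : Submodule R M) : Prop :=
  ∀ K : Submodule R M, N ⊓ K = ⊥ → K = ⊥

def elemAnn (R : Type u) [Ring R] {M : Type v} [AddCommGroup M] [Module R M]
    (m : M) : Submodule R R where
  carrier := {r : R | r • m = 0}
  zero_mem' := by simp
  add_mem' := fun {a b} ha hb => by
    simp only [Set.mem_setOf_eq] at *
    rw [add_smul, ha, hb, add_zero]
  smul_mem' := fun c a ha => by
    simp only [Set.mem_setOf_eq] at *
    rw [smul_eq_mul, mul_smul, ha, smul_zero]

lemma mem_elemAnn {R : Type u} [Ring R] {M : Type v} [AddCommGroup M] [Module R M]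
    {m : M} {x : R} : x ∈ elemAnn R m ↔ x • m = 0 := Iff.rfl

/-- Over a right GV-ring (every singular simple module is injective), submodules
of max-projective modules are max-projective. -/
theorem gv_submodule_maxProjective (R : Type u) [Ring R]
    (hGV : ∀ (S : Type u) [AddCommGroup S] [Module R S], IsSimpleModule R S →
      (∀ s : S, IsEssential (elemAnn R s)) → Module.Injective R S)
    (M : Type u) [AddCommGroup M] [Module R M] (hmp : MaxProjective R M)
    (N : Submodule R M) : MaxProjective R N := by
  intro I hI g
  by_cases hess : IsEssential I
  · have hsimple : IsSimpleModule R (R ⧸ I) := isSimpleModule_iff_isCoatom.mpr hI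
    have hann : ∀ s : R ⧸ I, IsEssential (elemAnn R s) := by
      intro s
      obtain ⟨r, rfl⟩ := I.mkQ_surjective s
      intro K hK
      have hKr : K.map (LinearMap.toSpanSingleton R R r) = ⊥ := by
        apply hess
        rw [eq_bot_iff]
        rintro y ⟨hyI, k, hkK, rfl⟩
        have hk : k ∈ elemAnn R (I.mkQ r) := by
          rw [mem_elemAnn]
          show k • I.mkQ r = 0
          rw [← map_smul, Submodule.mkQ_apply, Submodule.Quotient.mk_eq_zero]
          exact hyI
        have : k ∈ elemAnn R (I.mkQ r) ⊓ K := ⟨hk, hkK⟩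
        rw [hK, Submodule.mem_bot] at this
        simp [this]
      rw [eq_bot_iff]
      intro k hkK
      have hk : k ∈ elemAnn R (I.mkQ r) := by
        rw [mem_elemAnn]
        show k • I.mkQ r = 0
        rw [← map_smul, Submodule.mkQ_apply, Submodule.Quotient.mk_eq_zero]
        have h0 : LinearMap.toSpanSingleton R R r k ∈ K.map (LinearMap.toSpanSingleton R R r) :=
          ⟨k, hkK, rfl⟩
        rw [hKr, Submodule.mem_bot] at h0
        simp only [LinearMap.toSpanSingleton_apply] at h0
        show k • r ∈ I
        rw [h0]
        exact I.zero_mem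
      have : k ∈ elemAnn R (I.mkQ r) ⊓ K := ⟨hk, hkK⟩
      rw [hK] at this
      exact this
    have hinj := hGV (R ⧸ I) hsimple hann
    obtain ⟨G, hG⟩ := hinj.out N.subtype N.injective_subtype g
    obtain ⟨h, hh⟩ := hmp I hI G
    refine ⟨h.comp N.subtype, ?_⟩
    ext x
    have := hG x
    simp only [LinearMap.comp_apply] at *
    rw [← this, ← hh]
    rfl
  · simp only [IsEssential, not_forall] at hess
    obtain ⟨K, hIK, hKne⟩ := hess
    have hKnle : ¬ K ≤ I := by
      intro hle
      exact hKne (by rw [← hIK, inf_eq_right.mpr hle])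
    have hsup : I ⊔ K = ⊤ := by
      apply hI.2
      exact lt_of_le_of_ne le_sup_left (fun h => hKnle (h ▸ le_sup_right))
    have hcompl : IsCompl I K := ⟨disjoint_iff.mpr hIK, codisjoint_iff.mpr hsup⟩
    let e := Submodule.quotientEquivOfIsCompl I K hcompl
    refine ⟨K.subtype.comp (e.toLinearMap.comp g), ?_⟩
    ext x
    simp only [LinearMap.comp_apply, Submodule.subtype_apply]
    exact Submodule.mk_quotientEquivOfIsCompl_apply hcompl (g x)
end

section
/- Let τ be a preradical on the category of right R-modules with τ(R) = 0. If M is a max-projective right R-module, then M/τ(M) is max-projective. -/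
universe u v

theorem MaxProjective.quotient {R : Type u} [Ring R] {M : Type v} [AddCommGroup M] [Module R M]
    (hM : MaxProjective R M) (K : Submodule R M)
    (hK : ∀ h : M →ₗ[R] R, K ≤ LinearMap.ker h) : MaxProjective R (M ⧸ K) := by
  intro I hI g
  obtain ⟨h, hh⟩ := hM I hI (g.comp K.mkQ)
  refine ⟨K.liftQ h (hK h), K.linearMap_qext ?_⟩
  rw [LinearMap.comp_assoc, K.liftQ_mkQ, hh]

theorem preradical_le_ker_of_eq_bot {R : Type u} [Ring R]
    {τ : ∀ (M : Type u) [AddCommGroup M] [Module R M], Submodule R M}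
    (hnat : ∀ (M N : Type u) [AddCommGroup M] [Module R M] [AddCommGroup N] [Module R N]
      (f : M →ₗ[R] N), (τ M).map f ≤ τ N)
    {M N : Type u} [AddCommGroup M] [Module R M] [AddCommGroup N] [Module R N]
    (hN : τ N = ⊥) (f : M →ₗ[R] N) : τ M ≤ LinearMap.ker f := by
  rw [LinearMap.le_ker_iff_map, ← le_bot_iff, ← hN]
  exact hnat M N f

/-- Let `τ` be a preradical (a subfunctor of the identity on Mod-R) with
`τ(R) = 0`. If `M` is max-projective, then `M/τ(M)` is max-projective. -/
theorem quotient_preradical_maxProjective (R : Type u) [Ring R]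
    (τ : ∀ (M : Type u) [AddCommGroup M] [Module R M], Submodule R M)
    (hnat : ∀ (M N : Type u) [AddCommGroup M] [Module R M] [AddCommGroup N] [Module R N]
      (f : M →ₗ[R] N), (τ M).map f ≤ τ N)
    (hR : τ R = ⊥)
    (M : Type u) [AddCommGroup M] [Module R M] (hmp : MaxProjective R M) :
    MaxProjective R (M ⧸ τ M) :=
  hmp.quotient (τ M) (preradical_le_ker_of_eq_bot hnat hR)
end

section
/- Let R be a right nonsingular right self-injective ring. Then every finitely generated max-projective right R-module is projective. -/
universe u v

section Helpers

variable {R : Type u} [Ring R] {F : Type v} [AddCommGroup F] [Module R F]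

lemma ess_mono {N N' : Submodule R F} (h : IsEssential N) (hle : N ≤ N') :
    IsEssential N' := by
  intro J hJ
  exact h J (le_bot_iff.mp (hJ ▸ inf_le_inf_right J hle))

lemma zorn_disj (B X : Submodule R F) (hX : X ⊓ B = ⊥) :
    ∃ D, X ≤ D ∧ Maximal (fun D : Submodule R F => D ⊓ B = ⊥) D := by
  obtain ⟨m, hm1, hm2⟩ := zorn_le_nonempty₀ {D : Submodule R F | D ⊓ B = ⊥}
    (fun c hcs hchain y hy => by
      refine ⟨sSup c, ?_, fun z hz => le_sSup hz⟩
      rw [Set.mem_setOf_eq, eq_bot_iff]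
      rintro x hx
      rw [Submodule.mem_inf] at hx
      obtain ⟨p, hp, hxp⟩ :=
        (Submodule.mem_sSup_of_directed ⟨y, hy⟩ hchain.directedOn).1 hx.1
      have : x ∈ p ⊓ B := Submodule.mem_inf.mpr ⟨hxp, hx.2⟩
      rwa [hcs hp] at this) X hX
  exact ⟨m, hm1, hm2⟩

/-- If `N` is essential in `F`, then `(N : x) = {r | r • x ∈ N}` is essential in `R`. -/
lemma ess_comap {N : Submodule R F} (hN : IsEssential N) (x : F) :
    IsEssential (N.comap (LinearMap.toSpanSingleton R F x)) := by
  intro J hJ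
  have hD : J.map (LinearMap.toSpanSingleton R F x) ⊓ N = ⊥ := by
    rw [eq_bot_iff]
    rintro y hy
    rw [Submodule.mem_inf] at hy
    obtain ⟨r, hr, rfl⟩ := hy.1
    have : r ∈ N.comap (LinearMap.toSpanSingleton R F x) ⊓ J :=
      Submodule.mem_inf.mpr ⟨hy.2, hr⟩
    rw [hJ] at this
    have : r = 0 := (Submodule.mem_bot R).mp this
    simp [this]
  have hD' : J.map (LinearMap.toSpanSingleton R F x) = ⊥ :=
    hN _ (by rw [inf_comm]; exact hD)
  rw [eq_bot_iff]
  intro r hr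
  have : LinearMap.toSpanSingleton R F x r ∈ (⊥ : Submodule R F) := by
    rw [← hD']; exact Submodule.mem_map_of_mem hr
  have hmem : r ∈ N.comap (LinearMap.toSpanSingleton R F x) := by
    have h0 : LinearMap.toSpanSingleton R F x r = 0 := (Submodule.mem_bot R).mp this
    simp only [Submodule.mem_comap, h0]
    exact N.zero_mem
  have : r ∈ N.comap (LinearMap.toSpanSingleton R F x) ⊓ J :=
    Submodule.mem_inf.mpr ⟨hmem, hr⟩
  rw [hJ] at this
  exact this

lemma ess_sup_of_maximal {K C : Submodule R F}
    (hC : Maximal (fun C : Submodule R F => C ⊓ K = ⊥) C) :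
    IsEssential (K ⊔ C) := by
  intro J hJ
  have h1 : (C ⊔ J) ⊓ K = ⊥ := by
    rw [eq_bot_iff]
    rintro k hk
    rw [Submodule.mem_inf] at hk
    obtain ⟨c, hc, j, hj, hcj⟩ := Submodule.mem_sup.mp hk.1
    have hjm : j ∈ (K ⊔ C) ⊓ J := by
      refine Submodule.mem_inf.mpr ⟨?_, hj⟩
      have : j = k - c := by rw [← hcj]; abel
      rw [this]
      exact Submodule.sub_mem _ (Submodule.mem_sup_left hk.2) (Submodule.mem_sup_right hc)
    rw [hJ] at hjm
    have hj0 : j = 0 := hjm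
    have : k = c := by rw [← hcj, hj0, add_zero]
    have : k ∈ C ⊓ K := Submodule.mem_inf.mpr ⟨this ▸ hc, hk.2⟩
    rwa [hC.1] at this
  have h2 : C ⊔ J ≤ C := hC.2 h1 le_sup_left
  rw [eq_bot_iff]
  intro j hj
  have : j ∈ (K ⊔ C) ⊓ J :=
    Submodule.mem_inf.mpr ⟨Submodule.mem_sup_right (h2 (Submodule.mem_sup_right hj)), hj⟩
  rwa [hJ] at this

/-- Elements of the "closure" `K'` of `K` have essential relative annihilator. -/
lemma ess_comap_of_closure {K C K' : Submodule R F}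
    (hC : Maximal (fun C : Submodule R F => C ⊓ K = ⊥) C)
    (hK'C : K' ⊓ C = ⊥) (hKK' : K ≤ K') {a : F} (ha : a ∈ K') :
    IsEssential (K.comap (LinearMap.toSpanSingleton R F a)) := by
  intro J hJ
  set D := J.map (LinearMap.toSpanSingleton R F a) with hDdef
  have hDK' : D ≤ K' := by
    rintro y ⟨r, hr, rfl⟩
    exact K'.smul_mem r ha
  have hDK : D ⊓ K = ⊥ := by
    rw [eq_bot_iff]
    rintro y hy
    rw [Submodule.mem_inf] at hy
    obtain ⟨r, hr, rfl⟩ := hy.1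
    have : r ∈ K.comap (LinearMap.toSpanSingleton R F a) ⊓ J :=
      Submodule.mem_inf.mpr ⟨hy.2, hr⟩
    rw [hJ] at this
    have : r = 0 := (Submodule.mem_bot R).mp this
    simp [this]
  have h1 : (C ⊔ D) ⊓ K = ⊥ := by
    rw [eq_bot_iff]
    rintro k hk
    rw [Submodule.mem_inf] at hk
    obtain ⟨c, hc, d, hd, hcd⟩ := Submodule.mem_sup.mp hk.1
    have hcK' : c ∈ K' ⊓ C := by
      refine Submodule.mem_inf.mpr ⟨?_, hc⟩
      have : c = k - d := by rw [← hcd]; abel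
      rw [this]
      exact Submodule.sub_mem _ (hKK' hk.2) (hDK' hd)
    rw [hK'C] at hcK'
    have hc0 : c = 0 := hcK'
    have hkd : k = d := by rw [← hcd, hc0, zero_add]
    have : k ∈ D ⊓ K := Submodule.mem_inf.mpr ⟨hkd ▸ hd, hk.2⟩
    rwa [hDK] at this
  have h2 : C ⊔ D ≤ C := hC.2 h1 le_sup_left
  have hD0 : D = ⊥ := by
    rw [eq_bot_iff]
    intro d hd
    have : d ∈ K' ⊓ C :=
      Submodule.mem_inf.mpr ⟨hDK' hd, h2 (Submodule.mem_sup_right hd)⟩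
    rwa [hK'C] at this
  rw [eq_bot_iff]
  intro r hr
  have hra : LinearMap.toSpanSingleton R F a r ∈ D := Submodule.mem_map_of_mem hr
  rw [hD0] at hra
  have hmem : r ∈ K.comap (LinearMap.toSpanSingleton R F a) := by
    have : LinearMap.toSpanSingleton R F a r = 0 := hra
    simp only [Submodule.mem_comap, this]
    exact K.zero_mem
  have : r ∈ K.comap (LinearMap.toSpanSingleton R F a) ⊓ J :=
    Submodule.mem_inf.mpr ⟨hmem, hr⟩
  rwa [hJ] at this

end Helpers

lemma nonsing_pi {R : Type u} [Ring R]
    (hns : ∀ r : R, IsEssential (elemAnn R r) → r = 0) {n : ℕ}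
    (x : Fin n → R) (J : Submodule R R) (hJ : IsEssential J)
    (h0 : ∀ r ∈ J, r • x = 0) : x = 0 := by
  funext i
  refine hns (x i) (ess_mono hJ ?_)
  intro r hr
  have := congrFun (h0 r hr) i
  show r • x i = 0
  simpa using this

theorem key_s14 (R : Type u) [Ring R] [Module.Injective R R]
    (hns : ∀ r : R, IsEssential (elemAnn R r) → r = 0)
    (n : ℕ) (K : Submodule R (Fin n → R))
    (hmp : MaxProjective R ((Fin n → R) ⧸ K)) :
    Module.Projective R ((Fin n → R) ⧸ K) := by
  -- complement C of K, and closure K' of K (complement of C containing K)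
  obtain ⟨C, -, hC⟩ := zorn_disj K ⊥ (by simp)
  obtain ⟨K', hKK', hK'⟩ := zorn_disj C K (by rw [inf_comm]; exact hC.1)
  -- construct the "projection" q : F → F with q|K' = id, q|C = 0
  set u : (↥K' × ↥C) →ₗ[R] (Fin n → R) := (K'.subtype).coprod C.subtype with hu
  have huinj : Function.Injective u := by
    rw [← LinearMap.ker_eq_bot, eq_bot_iff]
    rintro ⟨a, b⟩ hab
    have h1 : (a : Fin n → R) + (b : Fin n → R) = 0 := hab
    have h2 : (a : Fin n → R) ∈ K' ⊓ C := by
      refine Submodule.mem_inf.mpr ⟨a.2, ?_⟩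
      have : (a : Fin n → R) = -(b : Fin n → R) := by
        rw [eq_neg_iff_add_eq_zero]; exact h1
      rw [this]; exact C.neg_mem b.2
    rw [hK'.1] at h2
    have ha0 : (a : Fin n → R) = 0 := (Submodule.mem_bot _).mp h2
    have hb0 : (b : Fin n → R) = 0 := by rwa [ha0, zero_add] at h1
    have haa : a = 0 := Subtype.ext ha0
    have hbb : b = 0 := Subtype.ext hb0
    simp [haa, hbb, Prod.ext_iff]
  have hext : ∀ i : Fin n, ∃ qi : (Fin n → R) →ₗ[R] R,
      ∀ p : ↥K' × ↥C, qi (u p) = (LinearMap.proj i).comp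
        ((K'.subtype).comp (LinearMap.fst R ↥K' ↥C)) p :=
    fun i => Module.Injective.out u huinj _
  choose qf hqf using hext
  set q : (Fin n → R) →ₗ[R] (Fin n → R) := LinearMap.pi qf with hqdef
  have hq : ∀ (a : ↥K') (b : ↥C), q ((a : Fin n → R) + b) = a := by
    intro a b
    funext i
    have h := hqf i (a, b)
    simp only [hu, LinearMap.comp_apply, LinearMap.coprod_apply, LinearMap.proj_apply,
      LinearMap.fst_apply, Submodule.subtype_apply] at h
    exact h
  have hqK' : ∀ a ∈ K', q a = a := by
    intro a ha
    have := hq ⟨a, ha⟩ 0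
    simpa using this
  have hqC : ∀ b ∈ C, q b = 0 := by
    intro b hb
    have := hq 0 ⟨b, hb⟩
    simpa using this
  -- q is idempotent, by nonsingularity
  have hKC_ess : IsEssential (K ⊔ C) := ess_sup_of_maximal hC
  have hK'C_ess : IsEssential (K' ⊔ C) :=
    ess_mono hKC_ess (sup_le_sup_right hKK' C)
  have hq2 : ∀ x, q (q x) = q x := by
    intro x
    have hJess : IsEssential ((K' ⊔ C).comap (LinearMap.toSpanSingleton R (Fin n → R) x)) :=
      ess_comap hK'C_ess x
    have h0 : ∀ r ∈ (K' ⊔ C).comap (LinearMap.toSpanSingleton R (Fin n → R) x),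
        r • (q (q x) - q x) = 0 := by
      intro r hr
      have hrx : r • x ∈ K' ⊔ C := hr
      obtain ⟨a, ha, b, hb, hab⟩ := Submodule.mem_sup.mp hrx
      have e1 : q (r • x) = a := by rw [← hab]; exact hq ⟨a, ha⟩ ⟨b, hb⟩
      have e2 : q (q (r • x)) = a := by rw [e1]; exact hqK' a ha
      have key1 : r • (q (q x) - q x) = q (q (r • x)) - q (r • x) := by
        simp only [map_smul, smul_sub]
      rw [key1, e2, e1, sub_self]
    exact sub_eq_zero.mp (nonsing_pi hns _ _ hJess h0)
  -- the range of q lies in K'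
  have hrange : ∀ x, q x ∈ K' := by
    intro x
    have hsup : (K' ⊔ LinearMap.range q) ⊓ C = ⊥ := by
      rw [eq_bot_iff]
      rintro z hz
      rw [Submodule.mem_inf] at hz
      obtain ⟨a, ha, w, hw, haw⟩ := Submodule.mem_sup.mp hz.1
      obtain ⟨y, rfl⟩ := hw
      have hqz : q z = z := by
        rw [← haw, map_add, hqK' a ha, hq2]
      have : q z = 0 := hqC z hz.2
      rw [hqz] at this
      simp [this]
    have hle : K' ⊔ LinearMap.range q ≤ K' := hK'.2 hsup le_sup_left
    exact hle (Submodule.mem_sup_right ⟨x, rfl⟩)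
  -- now work in M = F ⧸ K
  set π := K.mkQ with hπdef
  have hπsurj : Function.Surjective π := Submodule.mkQ_surjective K
  have hτker : K ≤ LinearMap.ker (LinearMap.id - q) := by
    intro k hk
    have : q k = k := hqK' k (hKK' hk)
    simp [LinearMap.mem_ker, this]
  set τ : ((Fin n → R) ⧸ K) →ₗ[R] (Fin n → R) := K.liftQ (LinearMap.id - q) hτker with hτdef
  have hτ : ∀ x : Fin n → R, τ (π x) = x - q x := fun x => Submodule.liftQ_apply K _ x
  set ρ : ((Fin n → R) ⧸ K) →ₗ[R] ((Fin n → R) ⧸ K) := π.comp τ with hρdef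
  have hρ : ∀ x : Fin n → R, ρ (π x) = π (x - q x) := by
    intro x; simp [hρdef, hτ]
  have hρidem : ∀ m, ρ (ρ m) = ρ m := by
    intro m
    obtain ⟨x, rfl⟩ := hπsurj m
    rw [hρ, hρ]
    congr 1
    simp only [map_sub, hq2]
    abel
  by_cases hS : LinearMap.ker ρ = ⊥
  · -- ρ is injective and idempotent, hence the identity; τ is a splitting
    have hρinj : Function.Injective ρ := LinearMap.ker_eq_bot.mp hS
    have hρid : ∀ m, ρ m = m := fun m => hρinj (hρidem m)
    refine Module.Projective.of_split τ π ?_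
    apply LinearMap.ext
    intro m
    exact hρid m
  · -- the singular part is nonzero; derive a contradiction with max-projectivity
    exfalso
    set S := LinearMap.ker ρ with hSdef
    -- every element of S is annihilated by an essential left ideal
    have hSsing : ∀ m ∈ S, ∃ J : Submodule R R, IsEssential J ∧ ∀ r ∈ J, r • m = 0 := by
      intro m hm
      obtain ⟨x, rfl⟩ := hπsurj m
      have h1 : π (x - q x) = 0 := by rw [← hρ]; exact hm
      have h2 : x - q x ∈ K := (Submodule.Quotient.mk_eq_zero K).mp h1
      have h3 : π x = π (q x) := by
        rw [← sub_eq_zero, ← map_sub]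
        exact (Submodule.Quotient.mk_eq_zero K).mpr h2
      refine ⟨K.comap (LinearMap.toSpanSingleton R (Fin n → R) (q x)),
        ess_comap_of_closure hC hK'.1 hKK' (hrange x), ?_⟩
      intro r hr
      have : r • q x ∈ K := hr
      rw [h3, ← map_smul]
      exact (Submodule.Quotient.mk_eq_zero K).mpr this
    -- S is a finitely generated module
    haveI : Module.Finite R ((Fin n → R) ⧸ K) :=
      Module.Finite.of_surjective π hπsurj
    set δ : ((Fin n → R) ⧸ K) →ₗ[R] ((Fin n → R) ⧸ K) := LinearMap.id - ρ with hδdef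
    have hpSmem : ∀ m, δ m ∈ S := by
      intro m
      simp only [hδdef, hSdef, LinearMap.mem_ker, LinearMap.sub_apply, LinearMap.id_apply,
        map_sub, hρidem, sub_self]
    set pS : ((Fin n → R) ⧸ K) →ₗ[R] ↥S := δ.codRestrict S hpSmem with hpSdef
    have hpSsurj : Function.Surjective pS := by
      rintro ⟨m, hm⟩
      refine ⟨m, Subtype.ext ?_⟩
      have : ρ m = 0 := hm
      simp [hpSdef, hδdef, this]
    haveI : Module.Finite R ↥S := Module.Finite.of_surjective pS hpSsurj
    -- S has a maximal submodule
    haveI : IsCoatomic (Submodule R ↥S) :=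
      CompleteLattice.coatomic_of_top_compact
        ((Submodule.fg_iff_compact _).mp Module.Finite.fg_top)
    have hSnt : (⊥ : Submodule R ↥S) ≠ ⊤ := by
      intro h
      apply hS
      rw [eq_bot_iff]
      intro m hm
      have : (⟨m, hm⟩ : ↥S) ∈ (⊤ : Submodule R ↥S) := trivial
      rw [← h] at this
      have : (⟨m, hm⟩ : ↥S) = 0 := this
      simpa using congrArg Subtype.val this
    obtain ⟨L, hL, -⟩ := (eq_top_or_exists_le_coatom (⊥ : Submodule R ↥S)).resolve_left hSnt
    haveI hsimple : IsSimpleModule R (↥S ⧸ L) := isSimpleModule_iff_isCoatom.mpr hL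
    obtain ⟨s₀, hs₀⟩ := SetLike.exists_of_lt (lt_top_iff_ne_top.mpr hL.1)
    replace hs₀ : s₀ ∉ L := hs₀.2
    set ℓ : R →ₗ[R] (↥S ⧸ L) := (L.mkQ).comp (LinearMap.toSpanSingleton R ↥S s₀) with hℓdef
    have hℓ1 : ℓ 1 ≠ 0 := by
      simp only [hℓdef, LinearMap.comp_apply, LinearMap.toSpanSingleton_apply, one_smul]
      rw [Submodule.mkQ_apply, Ne, Submodule.Quotient.mk_eq_zero]
      exact hs₀
    have hℓsurj : Function.Surjective ℓ := by
      rw [← LinearMap.range_eq_top]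
      rcases hsimple.1.eq_bot_or_eq_top (LinearMap.range ℓ) with h | h
      · exfalso
        apply hℓ1
        have : ℓ 1 ∈ LinearMap.range ℓ := ⟨1, rfl⟩
        rw [h] at this
        exact this
      · exact h
    set I := LinearMap.ker ℓ with hIdef
    set eI : (R ⧸ I) ≃ₗ[R] (↥S ⧸ L) := ℓ.quotKerEquivOfSurjective hℓsurj with heIdef
    haveI : IsSimpleModule R (R ⧸ I) := IsSimpleModule.congr eI
    have hIcoatom : IsCoatom I := isSimpleModule_iff_isCoatom.mp this
    set g : ((Fin n → R) ⧸ K) →ₗ[R] (R ⧸ I) :=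
      (eI.symm.toLinearMap).comp ((L.mkQ).comp pS) with hgdef
    obtain ⟨h, hh⟩ := hmp I hIcoatom g
    -- h vanishes on S
    have hzero : h (s₀ : (Fin n → R) ⧸ K) = 0 := by
      obtain ⟨J, hJess, hJ0⟩ := hSsing (s₀ : (Fin n → R) ⧸ K) s₀.2
      refine hns _ (ess_mono hJess ?_)
      intro r hr
      have : r • h (s₀ : (Fin n → R) ⧸ K) = 0 := by
        rw [← map_smul, hJ0 r hr, map_zero]
      exact this
    have hgs₀ : g (s₀ : (Fin n → R) ⧸ K) = 0 := by
      rw [← hh]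
      simp [hzero]
    -- but g s₀ ≠ 0
    have hpS_s₀ : pS (s₀ : (Fin n → R) ⧸ K) = s₀ := by
      apply Subtype.ext
      have : ρ (s₀ : (Fin n → R) ⧸ K) = 0 := s₀.2
      simp [hpSdef, hδdef, this]
    apply hℓ1
    have hmk : L.mkQ s₀ = 0 := by
      have := hgs₀
      rw [hgdef] at this
      simp only [LinearMap.comp_apply, hpS_s₀, LinearEquiv.coe_coe] at this
      have h2 : L.mkQ s₀ = eI (0 : R ⧸ I) := by
        rw [← this, LinearEquiv.apply_symm_apply]
      rw [h2, map_zero]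
    exfalso
    apply hs₀
    exact (Submodule.Quotient.mk_eq_zero L).mp hmk

/-- Over a right nonsingular right self-injective ring, every finitely generated
max-projective module is projective. -/
theorem fg_maxProjective_projective_of_nonsingular_selfInjective
    (R : Type u) [Ring R] [Module.Injective R R]
    (hns : ∀ r : R, IsEssential (elemAnn R r) → r = 0)
    (M : Type u) [AddCommGroup M] [Module R M] [Module.Finite R M]
    (hmp : MaxProjective R M) : Module.Projective R M := by
  obtain ⟨n, π, hπ⟩ := Module.Finite.exists_fin' R M
  set K := LinearMap.ker π with hK
  set e : ((Fin n → R) ⧸ K) ≃ₗ[R] M := π.quotKerEquivOfSurjective hπ with he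
  have hmp' : MaxProjective R ((Fin n → R) ⧸ K) := by
    intro I hI g
    obtain ⟨h, hh⟩ := hmp I hI (g.comp e.symm.toLinearMap)
    refine ⟨h.comp e.toLinearMap, ?_⟩
    apply LinearMap.ext
    intro m
    have := LinearMap.congr_fun hh (e m)
    simpa using this
  haveI := key_s14 R hns n K hmp'
  exact Module.Projective.of_equiv e
end

section
/- Let R be a right Hereditary ring and E an indecomposable injective right R-module. Then E is max-projective if and only if either Rad(E) = E or E is projective. -/
universe u v

/-- Over a right hereditary ring, an indecomposable injective module is
max-projective iff either its radical equals itself or it is projective. -/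
theorem indecomposable_injective_maxProjective_iff (R : Type u) [Ring R]
    (hHer : ∀ I : Submodule R R, Module.Projective R I)
    (E : Type u) [AddCommGroup E] [Module R E] [Module.Injective R E]
    [Nontrivial E]
    (hInd : ∀ N N' : Submodule R E, IsCompl N N' → N = ⊥ ∨ N = ⊤) :
    MaxProjective R E ↔
      (sInf {N : Submodule R E | IsCoatom N} = ⊤ ∨ Module.Projective R E) := by
  constructor
  · intro hmp
    by_cases hco : ∃ N : Submodule R E, IsCoatom N
    · right
      obtain ⟨N, hN⟩ := hco
      -- E ⧸ N is simple
      have hsimp : IsSimpleModule R (E ⧸ N) := isSimpleModule_iff_isCoatom.2 hN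
      have hnt : Nontrivial (E ⧸ N) := IsSimpleModule.nontrivial R (E ⧸ N)
      obtain ⟨x, hx⟩ := exists_ne (0 : E ⧸ N)
      -- map R → E ⧸ N, r ↦ r • x, is surjective
      set φ : R →ₗ[R] E ⧸ N := LinearMap.toSpanSingleton R (E ⧸ N) x with hφ
      have hφsurj : Function.Surjective φ := by
        have : LinearMap.range φ = ⊤ := by
          rcases (hsimp.1.eq_bot_or_eq_top (LinearMap.range φ)) with h | h
          · exfalso
            apply hx
            have : φ 1 ∈ LinearMap.range φ := ⟨1, rfl⟩
            rw [h] at this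
            simpa [hφ] using this
          · exact h
        exact LinearMap.range_eq_top.1 this
      set I : Submodule R R := LinearMap.ker φ with hI
      have e : (R ⧸ I) ≃ₗ[R] (E ⧸ N) := φ.quotKerEquivOfSurjective hφsurj
      have hIco : IsCoatom I := by
        rw [← isSimpleModule_iff_isCoatom]
        exact IsSimpleModule.congr e
      -- the surjection g : E → R ⧸ I
      set g : E →ₗ[R] R ⧸ I := (e.symm : (E ⧸ N) →ₗ[R] R ⧸ I).comp N.mkQ with hg
      have hgne : g ≠ 0 := by
        intro h0
        have hsurj : Function.Surjective g :=
          e.symm.surjective.comp N.mkQ_surjective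
        have hnt' : Nontrivial (R ⧸ I) := Nontrivial.mk <| by
          obtain ⟨a, b, hab⟩ := (IsSimpleModule.nontrivial R (E ⧸ N)).exists_pair_ne
          exact ⟨e.symm a, e.symm b, fun h => hab (e.symm.injective h)⟩
        obtain ⟨y, hy⟩ := exists_ne (0 : R ⧸ I)
        obtain ⟨z, hz⟩ := hsurj y
        rw [h0] at hz
        exact hy (hz ▸ rfl)
      obtain ⟨h, hh⟩ := hmp I hIco g
      have hhne : h ≠ 0 := by
        intro h0; apply hgne; rw [← hh, h0]; ext z; simp
      -- split off the kernel using projectivity of the range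
      have hproj : Module.Projective R (LinearMap.range h) := hHer _
      obtain ⟨s, hs⟩ := Module.projective_lifting_property h.rangeRestrict
        (LinearMap.id) h.surjective_rangeRestrict
      have hsect : ∀ y : LinearMap.range h, h.rangeRestrict (s y) = y := by
        intro y
        exact congrArg (fun f => f y) hs
      have hcompl : IsCompl (LinearMap.ker h) (LinearMap.range s) := by
        constructor
        · rw [disjoint_iff_inf_le]
          rintro z ⟨hz1, y, rfl⟩
          have : h.rangeRestrict (s y) = 0 := by
            rw [← LinearMap.mem_ker, LinearMap.ker_rangeRestrict]
            exact hz1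
          rw [hsect y] at this
          simp [this]
        · rw [codisjoint_iff_le_sup]
          intro z _
          refine Submodule.mem_sup.2 ⟨z - s (h.rangeRestrict z), ?_, s (h.rangeRestrict z),
            ⟨_, rfl⟩, by abel⟩
          rw [← LinearMap.ker_rangeRestrict]
          simp only [LinearMap.mem_ker, map_sub, hsect, sub_self]
      rcases hInd _ _ hcompl with hk | hk
      · -- h injective, so E ≅ range h is projective
        have hinj : Function.Injective h := LinearMap.ker_eq_bot.1 hk
        exact Module.Projective.of_equiv (LinearEquiv.ofInjective h hinj).symm
      · exact absurd (LinearMap.ker_eq_top.1 hk) hhne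
    · left
      push_neg at hco
      have : {N : Submodule R E | IsCoatom N} = ∅ := by
        ext N; simp [hco N]
      rw [this, sInf_empty]
  · rintro (hrad | hproj)
    · -- radical is everything: every map to a simple module is zero
      intro I hI g
      have hsimp : IsSimpleModule R (R ⧸ I) := isSimpleModule_iff_isCoatom.2 hI
      have hg0 : g = 0 := by
        by_contra hg
        have hker : LinearMap.ker g ≠ ⊤ := fun h => hg (LinearMap.ker_eq_top.1 h)
        have hrange : LinearMap.range g = ⊤ := by
          rcases hsimp.1.eq_bot_or_eq_top (LinearMap.range g) with h | h
          · exact absurd (LinearMap.range_eq_bot.1 h) hg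
          · exact h
        have hcoker : IsCoatom (LinearMap.ker g) := by
          rw [← isSimpleModule_iff_isCoatom]
          exact IsSimpleModule.congr
            (g.quotKerEquivOfSurjective (LinearMap.range_eq_top.1 hrange))
        have := sInf_le (show LinearMap.ker g ∈ {N : Submodule R E | IsCoatom N} from hcoker)
        rw [hrad, top_le_iff] at this
        exact hker this
      exact ⟨0, by rw [hg0]; ext z; simp⟩
    · intro I hI g
      exact Module.projective_lifting_property I.mkQ g I.mkQ_surjective
end

section
/- If R is a right Noetherian right small ring, then every injective right R-module E satisfies Hom(E, R/I) = 0 for every right ideal I of R; in particular every injective right R-module is R-projective. -/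
/-!
Smallness says that an injective module `E` has no maximal submodules, i.e. `Rad E = E`, and this
passes to every image of `E`. An image of `E` in `R/I` is finitely generated because `R` is right
Noetherian, and a nonzero finitely generated module has a maximal submodule; so the image is zero.
-/

universe u v

namespace Module

variable {R M N : Type*} [Ring R] [AddCommGroup M] [Module R M] [AddCommGroup N] [Module R N]

theorem jacobson_eq_top_of_surjective {f : M →ₗ[R] N} (hf : Function.Surjective f)
    (h : jacobson R M = ⊤) : jacobson R N = ⊤ :=
  top_le_iff.mp <| by
    simpa only [h, Submodule.map_top, LinearMap.range_eq_top.mpr hf] using map_jacobson_le f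

theorem subsingleton_of_jacobson_eq_top [Module.Finite R M] (h : jacobson R M = ⊤) :
    Subsingleton M :=
  not_nontrivial_iff_subsingleton.mp fun _ => (jacobson_lt_top R M).ne h

end Module

theorem LinearMap.eq_zero_of_jacobson_eq_top {R M N : Type*} [Ring R] [AddCommGroup M]
    [Module R M] [AddCommGroup N] [Module R N] [IsNoetherian R N]
    (h : Module.jacobson R M = ⊤) (f : M →ₗ[R] N) : f = 0 := by
  have : Subsingleton (range f) := Module.subsingleton_of_jacobson_eq_top <|
    Module.jacobson_eq_top_of_surjective f.surjective_rangeRestrict h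
  exact range_eq_bot.mp (Submodule.eq_bot_of_subsingleton)

theorem RProjective.of_forall_eq_zero {R : Type u} [Ring R] {M : Type v} [AddCommGroup M]
    [Module R M] (h : ∀ (I : Submodule R R) (g : M →ₗ[R] R ⧸ I), g = 0) : RProjective R M :=
  fun I g => ⟨0, by rw [h I g, LinearMap.comp_zero]⟩

/-- If `R` is right Noetherian and right small (`Rad(E) = E` for every injective
module `E`), then `Hom(E, R/I) = 0` for every injective `E` and every right ideal
`I`; in particular every injective module is `R`-projective. -/
theorem noetherian_small_hom_vanishes (R : Type u) [Ring R] [IsNoetherianRing R]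
    (hsmall : ∀ (E : Type u) [AddCommGroup E] [Module R E], Module.Injective R E →
      sInf {N : Submodule R E | IsCoatom N} = ⊤) :
    ∀ (E : Type u) [AddCommGroup E] [Module R E], Module.Injective R E →
      (∀ (I : Submodule R R) (f : E →ₗ[R] R ⧸ I), f = 0) ∧ RProjective R E := by
  intro E _ _ hE
  -- `hsmall E hE` is `Module.jacobson R E = ⊤` by unfolding `Module.jacobson`.
  have hvan (I : Submodule R R) (f : E →ₗ[R] R ⧸ I) : f = 0 :=
    f.eq_zero_of_jacobson_eq_top (hsmall E hE)
  exact ⟨hvan, .of_forall_eq_zero hvan⟩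
end

section
/- Let R be a local ring which is right max-QF (every injective right R-module is max-projective). Then R is either right self-injective or right small. -/
universe u v

/-- A submodule `N ≤ M` is *superfluous* (small) if `N + L = M` forces `L = M`. -/
def IsSuperfluous {R : Type u} [Ring R] {M : Type v} [AddCommGroup M] [Module R M]
    (N : Submodule R M) : Prop :=
  ∀ K : Submodule R M, N ⊔ K = ⊤ → K = ⊤

/-!
If `R` is not small, some injective essential extension `R ≤ E` has a proper submodule `K` with
`R + K = E`. Then `E ⧸ K` is a nonzero cyclic module, so `E` maps onto some `R ⧸ I`, `I` maximal,
extending the projection `R → R ⧸ I`. Max-projectivity lifts this map to `h : E → R`, whose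
restriction to `R` is right multiplication by some `c ≡ 1 mod I`; as `R` is local, `c` is a unit.
Hence `R ∩ ker h = 0`, so `ker h = 0` by essentiality, and `E = R ⊕ ker h = R` is injective.
-/

open Function

namespace LinearMap

variable {R : Type*} [Ring R] {M N : Type*} [AddCommGroup M] [Module R M]
  [AddCommGroup N] [Module R N]

theorem exists_comp_eq_mkQ_of_surjective {f : M →ₗ[R] N} (hf : Surjective f)
    {p : Submodule R M} (hp : ker f ≤ p) : ∃ g : N →ₗ[R] M ⧸ p, g ∘ₗ f = p.mkQ :=
  ⟨Submodule.factor hp ∘ₗ (f.quotKerEquivOfSurjective hf).symm.toLinearMap, by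
    ext x
    simp [quotKerEquivOfSurjective_symm_apply]⟩

theorem exists_isCoatom_comp_eq_mkQ_of_sup_eq_top (f : R →ₗ[R] M) {K : Submodule R M}
    (hK : range f ⊔ K = ⊤) (hK_ne : K ≠ ⊤) :
    ∃ I : Submodule R R, IsCoatom I ∧ ∃ g : M →ₗ[R] R ⧸ I, g ∘ₗ f = I.mkQ := by
  have hsurj : Surjective (K.mkQ ∘ₗ f) := by
    rw [← range_eq_top, range_comp, Submodule.map_mkQ_eq_top, sup_comm, hK]
  have hker : ker (K.mkQ ∘ₗ f) ≠ ⊤ := by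
    rw [ker_comp, Submodule.ker_mkQ, Ne, ← range_le_iff_comap]
    intro hle
    exact hK_ne (by rwa [sup_eq_right.2 hle] at hK)
  obtain ⟨I, hI, hle⟩ := (eq_top_or_exists_le_coatom _).resolve_left hker
  obtain ⟨g, hg⟩ := exists_comp_eq_mkQ_of_surjective hsurj hle
  exact ⟨I, hI, g ∘ₗ K.mkQ, by rw [comp_assoc, hg]⟩

theorem bijective_of_isEssential_range_of_bijective_comp {f : M →ₗ[R] N} {h : N →ₗ[R] M}
    (hhf : Bijective (h ∘ₗ f)) (hf : IsEssential (range f)) : Bijective f := by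
  have hker : ker h = ⊥ := by
    refine hf _ (eq_bot_iff.2 ?_)
    rintro _ ⟨⟨m, rfl⟩, hm⟩
    have : (h ∘ₗ f) m = (h ∘ₗ f) 0 := by simpa using hm
    simp [hhf.1 this]
  refine ⟨Injective.of_comp (f := ⇑h) hhf.1, fun n => ?_⟩
  obtain ⟨m, hm⟩ := hhf.2 (h n)
  exact ⟨m, ker_eq_bot.1 hker hm⟩

end LinearMap

theorem Module.Injective.of_linearEquiv {R : Type*} [Ring R] {Q M : Type v} [AddCommGroup Q]
    [Module R Q] [AddCommGroup M] [Module R M] (hQ : Module.Injective R Q) (e : Q ≃ₗ[R] M) :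
    Module.Injective R M := by
  refine ⟨fun X Y _ _ _ _ f hf g => ?_⟩
  obtain ⟨h, hh⟩ := hQ.out f hf (e.symm.toLinearMap ∘ₗ g)
  exact ⟨e.toLinearMap ∘ₗ h, fun x => by simp [hh x]⟩

namespace IsLocalRing

variable {R : Type*} [Ring R] [IsLocalRing R] {I : Submodule R R}

theorem isUnit_of_sub_one_mem (hI : I ≠ ⊤) {c : R} (hc : c - 1 ∈ I) : IsUnit c := by
  refine (isUnit_or_isUnit_of_add_one (add_sub_cancel c 1)).resolve_right fun hu => hI ?_
  exact Ideal.eq_top_of_isUnit_mem I (by simpa using I.neg_mem hc) hu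

theorem bijective_of_mkQ_comp_eq_mkQ (hI : I ≠ ⊤) {φ : R →ₗ[R] R} (hφ : I.mkQ ∘ₗ φ = I.mkQ) :
    Bijective φ := by
  have hc : φ 1 - 1 ∈ I := by
    rw [← Submodule.Quotient.eq]
    exact LinearMap.congr_fun hφ 1
  have hφ_eq : ⇑φ = (· * φ 1) := funext fun r => by
    rw [← smul_eq_mul, ← map_smul, smul_eq_mul, mul_one]
  exact hφ_eq ▸ IsUnit.isUnit_iff_mulRight_bijective.1 (isUnit_of_sub_one_mem hI hc)

end IsLocalRing

/-- A local right max-QF ring is either right self-injective or right small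
(i.e. `R` is superfluous in its injective hull). -/
theorem local_maxQF_selfInjective_or_small (R : Type u) [Ring R] [IsLocalRing R]
    (hQF : ∀ (E : Type u) [AddCommGroup E] [Module R E], Module.Injective R E →
      MaxProjective R E) :
    Module.Injective R R ∨
      ∀ (E : Type u) [AddCommGroup E] [Module R E], Module.Injective R E →
        ∀ emb : R →ₗ[R] E, Function.Injective emb →
          IsEssential (LinearMap.range emb) → IsSuperfluous (LinearMap.range emb) := by
  refine or_iff_not_imp_right.2 fun hnot => ?_
  simp only [IsSuperfluous, not_forall] at hnot
  obtain ⟨E, _, _, hE, emb, -, hess, K, hsup, hK_ne⟩ := hnot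
  obtain ⟨I, hI, g, hg⟩ := emb.exists_isCoatom_comp_eq_mkQ_of_sup_eq_top hsup hK_ne
  obtain ⟨h, hh⟩ := hQF E hE I hI g
  have hhemb : Bijective (h ∘ₗ emb) :=
    IsLocalRing.bijective_of_mkQ_comp_eq_mkQ hI.1 (by rw [← LinearMap.comp_assoc, hh, hg])
  exact hE.of_linearEquiv
    (LinearEquiv.ofBijective emb (emb.bijective_of_isEssential_range_of_bijective_comp hhemb hess)).symm
end

section
/- Let R be a right Hereditary ring. Then every injective right R-module is max-projective if and only if every simple injective right R-module is projective. -/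
universe u v

/-!
A simple module `S ≅ R/I` that is max-projective admits a lift `S → R` of the isomorphism
`S → R/I`, hence embeds in `R` as a right ideal and is projective over a hereditary ring.
Conversely, a nonzero map from an injective module `E` to a simple module `R/I` is onto, so `R/I`
is injective as a quotient of `E`; if it is also projective, the projection `R → R/I` splits and
every map `E → R/I` lifts to `R`.
-/

open LinearMap

section

variable {R : Type u} [Ring R]

theorem Module.Injective.of_surjective (hHer : ∀ I : Submodule R R, Module.Projective R I)
    {E : Type v} {M : Type*} [AddCommGroup E] [Module R E] [AddCommGroup M] [Module R M]
    [Small.{v} R] [inj : Module.Injective R E] (g : E →ₗ[R] M) (hg : Function.Surjective g) :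
    Module.Injective R M :=
  Module.Baer.injective fun J f ↦ by
    have := hHer J
    obtain ⟨f', hf'⟩ := Module.projective_lifting_property g f hg
    obtain ⟨h, hh⟩ := Module.Baer.of_injective inj J f'
    exact ⟨g ∘ₗ h, fun x hx ↦ by rw [comp_apply, hh x hx, ← comp_apply, hf']⟩

theorem Module.Projective.of_injective (hHer : ∀ I : Submodule R R, Module.Projective R I)
    {M : Type v} [AddCommGroup M] [Module R M] (k : M →ₗ[R] R) (hk : Function.Injective k) :
    Module.Projective R M :=
  have := hHer (range k)
  .of_equiv' (LinearEquiv.ofInjective k hk).symm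

theorem Module.Projective.exists_comp_eq_of_surjective {M N P : Type*} [AddCommGroup M]
    [Module R M] [AddCommGroup N] [Module R N] [AddCommGroup P] [Module R P]
    [Module.Projective R P] {f : N →ₗ[R] P} (hf : Function.Surjective f) (g : M →ₗ[R] P) :
    ∃ h : M →ₗ[R] N, f ∘ₗ h = g := by
  obtain ⟨s, hs⟩ := f.exists_rightInverse_of_surjective (range_eq_top.mpr hf)
  exact ⟨s ∘ₗ g, by rw [← LinearMap.comp_assoc, hs, id_comp]⟩

theorem MaxProjective.exists_injective_of_isSimpleModule {S : Type v} [AddCommGroup S]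
    [Module R S] [IsSimpleModule R S] (h : MaxProjective R S) :
    ∃ k : S →ₗ[R] R, Function.Injective k := by
  obtain ⟨I, hI, ⟨e⟩⟩ := isSimpleModule_iff_quot_maximal.mp ‹IsSimpleModule R S›
  obtain ⟨k, hk⟩ := h I hI.out e.toLinearMap
  exact ⟨k, .of_comp (f := I.mkQ) (by rw [← coe_comp, hk]; exact e.injective)⟩

end

/-- Over a right hereditary ring, every injective module is max-projective iff
every simple injective module is projective. -/
theorem hereditary_maxQF_iff_simple_injective_projective (R : Type u) [Ring R]
    (hHer : ∀ I : Submodule R R, Module.Projective R I) :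
    (∀ (E : Type u) [AddCommGroup E] [Module R E], Module.Injective R E →
        MaxProjective R E) ↔
      (∀ (S : Type u) [AddCommGroup S] [Module R S],
        IsSimpleModule R S → Module.Injective R S → Module.Projective R S) := by
  constructor
  · intro hmax S _ _ _ hS
    obtain ⟨k, hk⟩ := (hmax S hS).exists_injective_of_isSimpleModule
    exact .of_injective hHer k hk
  · intro hsimp E _ _ hE I hI g
    obtain rfl | hg := eq_or_ne g 0
    · exact ⟨0, comp_zero _⟩
    have : IsSimpleModule R (R ⧸ I) := isSimpleModule_iff_isCoatom.mpr hI
    have := hsimp (R ⧸ I) this (.of_surjective hHer g (g.surjective_of_ne_zero hg))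
    exact Module.Projective.exists_comp_eq_of_surjective I.mkQ_surjective g
end
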